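/- Let H < -1, C ∈ (C_1, 0), and r, λ, θ as in the hyperbolic rotational construction. Writing B_2(u) = (cos θ(u), sin θ(u), 0, 0) and B_3(u) = (-sin θ(u), cos θ(u), 0, 0), the map ν(u,v) = -r λ·(0,0,sinh v, cosh v) - (r^2 λ/sqrt(r^2-1))·B_2 + (r'/sqrt(r^2-1))·B_3 satisfies ⟨ν, ν⟩ = 1 and ⟨ν, ∂φ/∂u⟩ = ⟨ν, ∂φ/∂v⟩ = 0, where φ(u,v) = sqrt(r^2-1)·B_2 + r·(0,0,sinh v, cosh v). -/

import Mathlib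

open Real

/-- The Lorentzian inner product on `ℝ⁴`. -/
def lorentz (x y : Fin 4 → ℝ) : ℝ := x 0 * y 0 + x 1 * y 1 + x 2 * y 2 - x 3 * y 3

/-- The immersion `φ(u,v) = √(r(u)²-1)·B₂(u) + r(u)·(0,0,sinh v, cosh v)`. -/
noncomputable def phiMap (r θ : ℝ → ℝ) (u v : ℝ) : Fin 4 → ℝ :=
  ![Real.sqrt ((r u) ^ 2 - 1) * Real.cos (θ u),
    Real.sqrt ((r u) ^ 2 - 1) * Real.sin (θ u),
    r u * Real.sinh v,
    r u * Real.cosh v]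

/-- The map `ν = -rλ·(0,0,sinh v,cosh v) - (r²λ/√(r²-1))·B₂ + (r'/√(r²-1))·B₃`. -/
noncomputable def nuMap (r lam θ : ℝ → ℝ) (u v : ℝ) : Fin 4 → ℝ :=
  ![-((r u) ^ 2 * lam u / Real.sqrt ((r u) ^ 2 - 1)) * Real.cos (θ u)
      + (deriv r u / Real.sqrt ((r u) ^ 2 - 1)) * (-Real.sin (θ u)),
    -((r u) ^ 2 * lam u / Real.sqrt ((r u) ^ 2 - 1)) * Real.sin (θ u)
      + (deriv r u / Real.sqrt ((r u) ^ 2 - 1)) * Real.cos (θ u),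
    -(r u * lam u) * Real.sinh v,
    -(r u * lam u) * Real.cosh v]

theorem stmt_15 (r lam θ : ℝ → ℝ)
    (hr : ContDiff ℝ (⊤ : ℕ∞) r) (hlam : ContDiff ℝ (⊤ : ℕ∞) lam) (hθ : ContDiff ℝ (⊤ : ℕ∞) θ)
    (hr1 : ∀ t, 1 < r t)
    (hode : ∀ t, (deriv r t) ^ 2 + (lam t) ^ 2 * (r t) ^ 2 = (r t) ^ 2 - 1)
    (hθ' : ∀ t, deriv θ t = r t * lam t / ((r t) ^ 2 - 1)) :
    ∀ u v : ℝ,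
      lorentz (nuMap r lam θ u v) (nuMap r lam θ u v) = 1 ∧
      lorentz (nuMap r lam θ u v) (fun i => deriv (fun w => phiMap r θ w v i) u) = 0 ∧
      lorentz (nuMap r lam θ u v) (fun i => deriv (fun w => phiMap r θ u w i) v) = 0 := by
  intro u v
  have hrd : Differentiable ℝ r := hr.differentiable (by simp)
  have hθd : Differentiable ℝ θ := hθ.differentiable (by simp)
  have hρ1 : (1:ℝ) < r u := hr1 u
  have hpos : (0:ℝ) < (r u)^2 - 1 := by nlinarith
  set s := Real.sqrt ((r u)^2 - 1) with hs_def
  have hs2 : s^2 = (r u)^2 - 1 := Real.sq_sqrt hpos.le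
  have hspos : 0 < s := Real.sqrt_pos.mpr hpos
  have hsne : s ≠ 0 := hspos.ne'
  have hinner : HasDerivAt (fun w => (r w)^2 - 1) (2 * r u * deriv r u) u := by
    have h := ((hrd u).hasDerivAt.pow 2).sub_const 1
    simpa [mul_comm, mul_assoc, mul_left_comm] using h
  have hsqrt : HasDerivAt (fun w => Real.sqrt ((r w)^2 - 1)) (r u * deriv r u / s) u := by
    have h := hinner.sqrt hpos.ne'
    convert h using 1
    rw [← hs_def]
    field_simp
  have hθu := (hθd u).hasDerivAt
  have hd0 : HasDerivAt (fun w => Real.sqrt ((r w)^2 - 1) * Real.cos (θ w))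
      (r u * deriv r u / s * Real.cos (θ u) + s * (-Real.sin (θ u) * deriv θ u)) u :=
    hsqrt.mul hθu.cos
  have hd1 : HasDerivAt (fun w => Real.sqrt ((r w)^2 - 1) * Real.sin (θ w))
      (r u * deriv r u / s * Real.sin (θ u) + s * (Real.cos (θ u) * deriv θ u)) u :=
    hsqrt.mul hθu.sin
  have hd2 : HasDerivAt (fun w => r w * Real.sinh v) (deriv r u * Real.sinh v) u :=
    (hrd u).hasDerivAt.mul_const _
  have hd3 : HasDerivAt (fun w => r w * Real.cosh v) (deriv r u * Real.cosh v) u :=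
    (hrd u).hasDerivAt.mul_const _
  have he2 : HasDerivAt (fun w => r u * Real.sinh w) (r u * Real.cosh v) v :=
    (Real.hasDerivAt_sinh v).const_mul (r u)
  have he3 : HasDerivAt (fun w => r u * Real.cosh w) (r u * Real.sinh v) v :=
    (Real.hasDerivAt_cosh v).const_mul (r u)
  have hode' : (deriv r u)^2 = s^2 - (lam u)^2 * (r u)^2 := by
    rw [hs2]; linarith [hode u]
  have hθ'' : deriv θ u = r u * lam u / s^2 := by rw [hs2]; exact hθ' u
  have hcs : Real.sin (θ u)^2 + Real.cos (θ u)^2 = 1 := Real.sin_sq_add_cos_sq _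
  have hch : Real.cosh v^2 - Real.sinh v^2 = 1 := Real.cosh_sq_sub_sinh_sq v
  refine ⟨?_, ?_, ?_⟩
  · simp only [lorentz, nuMap, Matrix.cons_val_zero, Matrix.cons_val_one, Matrix.head_cons,
      Matrix.cons_val_two, Matrix.tail_cons, Matrix.cons_val_three, ← hs_def]
    field_simp
    linear_combination ((r u)^4*(lam u)^2 + (deriv r u)^2) * hcs + hode' +
      -(lam u)^2*(r u)^2 * hs2 - s^2*(r u)^2*(lam u)^2 * hch
  · simp only [lorentz, nuMap, phiMap, Matrix.cons_val_zero, Matrix.cons_val_one,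
      Matrix.head_cons, Matrix.cons_val_two, Matrix.tail_cons, Matrix.cons_val_three, ← hs_def,
      hd0.deriv, hd1.deriv, hd2.deriv, hd3.deriv, hθ'']
    field_simp
    linear_combination ((r u)*(lam u)*(deriv r u)*(1-(r u)^2)) * hcs +
      (r u)*(lam u)*(deriv r u) * hs2 + s^2*(r u)*(lam u)*(deriv r u) * hch
  · simp only [lorentz, nuMap, phiMap, Matrix.cons_val_zero, Matrix.cons_val_one,
      Matrix.head_cons, Matrix.cons_val_two, Matrix.tail_cons, Matrix.cons_val_three, ← hs_def,
      he2.deriv, he3.deriv, deriv_const]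
    ring
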